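/- arXiv:2107.07012 — 4 statements merged into one kernel-verified Lean document; each statement's English description precedes it below -/
import Mathlib

section
/- Let φ: A → R be a flat ring morphism with A a principal ideal domain, and let Q be the intersection of some (non-empty) subset of the associated primes of R. Then the induced map A → R/Q is flat. In particular, A → R^red is flat. -/
/-!
Over a PID, flatness is torsion-freeness. Flatness of `R` makes the image `φ(a)` of every
nonzero `a : A` a nonzerodivisor of `R`, so `φ(a)` lies in no associated prime. Hence each
associated prime `P` satisfies `φ(a) x ∈ P → x ∈ P`, this property passes to intersections,
and it says exactly that the quotient is torsion-free. For the nilradical,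
`(φ(a) x)ⁿ = 0` forces `xⁿ = 0`.
-/

theorem IsAssociatedPrime.notMem_of_isSMulRegular {R M : Type*} [CommSemiring R]
    [AddCommMonoid M] [Module R M] {I : Ideal R} (h : IsAssociatedPrime I M) {r : R}
    (hr : IsSMulRegular M r) : r ∉ I := by
  obtain ⟨hI, x, rfl⟩ := h
  rintro ⟨n, hn⟩
  have hx : x = 0 := (hr.pow n).right_eq_zero_of_smul (by simpa using hn)
  subst hx
  apply hI.ne_top
  simp [Submodule.bot_colon', Submodule.annihilator_bot]

theorem Ideal.isTorsionFree_quotient_of_mul_mem {A R : Type*} [CommRing A] [Nontrivial A]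
    [CommRing R] [Algebra A R] (Q : Ideal R)
    (hQ : ∀ a : A, a ≠ 0 → ∀ x : R, algebraMap A R a * x ∈ Q → x ∈ Q) :
    Module.IsTorsionFree A (R ⧸ Q) := by
  refine .of_smul_eq_zero fun a z hz ↦ or_iff_not_imp_left.2 fun ha ↦ ?_
  obtain ⟨x, rfl⟩ := Ideal.Quotient.mk_surjective z
  rw [Algebra.smul_def, ← Ideal.Quotient.mk_algebraMap, ← map_mul,
    Ideal.Quotient.eq_zero_iff_mem] at hz
  exact Ideal.Quotient.eq_zero_iff_mem.2 (hQ a ha x hz)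

theorem stmt7_general (A R : Type*) [CommRing A] [IsDomain A] [IsPrincipalIdealRing A]
    [CommRing R] [Algebra A R] [Module.Flat A R]
    (S : Set (Ideal R)) (hass : S ⊆ associatedPrimes R R) :
    Module.Flat A (R ⧸ sInf S) ∧ Module.Flat A (R ⧸ nilradical R) := by
  have hreg (a : A) (ha : a ≠ 0) : IsSMulRegular R (algebraMap A R a) :=
    (isSMulRegular_algebraMap_iff R).2 (.of_ne_zero ha)
  have hS : Module.IsTorsionFree A (R ⧸ sInf S) :=
    (sInf S).isTorsionFree_quotient_of_mul_mem fun a ha x hx ↦ Ideal.mem_sInf.2 fun P hP ↦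
      ((hass hP).isPrime.mem_or_mem (Ideal.mem_sInf.1 hx hP)).resolve_left
        ((hass hP).notMem_of_isSMulRegular (hreg a ha))
  have hnil : Module.IsTorsionFree A (R ⧸ nilradical R) :=
    (nilradical R).isTorsionFree_quotient_of_mul_mem fun a ha x ⟨n, hn⟩ ↦
      ⟨n, (hreg (a ^ n) (pow_ne_zero n ha)).right_eq_zero_of_smul <| by
        rwa [map_pow, smul_eq_mul, ← mul_pow]⟩
  exact ⟨inferInstance, inferInstance⟩

/-- Let `φ : A → R` be a flat ring morphism with `A` a PID, and let `Q` be the intersection of a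
non-empty set of associated primes of `R`. Then `A → R/Q` is flat; in particular `A → R^red`
is flat. -/
theorem stmt7 (A R : Type*) [CommRing A] [IsDomain A] [IsPrincipalIdealRing A]
    [CommRing R] [IsNoetherianRing R] [Algebra A R] [Module.Flat A R]
    (S : Set (Ideal R)) (hne : S.Nonempty) (hass : S ⊆ associatedPrimes R R) :
    Module.Flat A (R ⧸ sInf S) ∧ Module.Flat A (R ⧸ nilradical R) :=
  stmt7_general A R S hass
end

section
/- Let φ: (A_p) → R_n be a flat local morphism of Noetherian local rings with A a PID and p = n ∩ A. If the fiber ring R_n ⊗_{A_p} k(p) is reduced, then R_n is reduced. -/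
/-!
If `p = 0` the fiber is `R_n` itself. Otherwise `p = (a)` and, by flatness, the image `t` of `a`
in `R_n` is a nonzerodivisor lying in the maximal ideal. A nilpotent `x` dies in the reduced ring
`R_n / (t)`, so `x = t y`; as `t` is regular, `y` is nilpotent too. Hence the nilradical `N`
satisfies `N ⊆ t N ⊆ 𝔪 N`, and Nakayama gives `N = 0`.
-/

theorem nilradical_le_span_singleton_mul_nilradical {S : Type*} [CommRing S] {t : S}
    (hreg : IsSMulRegular S t) (hred : IsReduced (S ⧸ Ideal.span {t})) :
    nilradical S ≤ Ideal.span {t} * nilradical S := by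
  rintro x ⟨k, hxk⟩
  have hx : x ∈ Ideal.span {t} := by
    rw [← Ideal.Quotient.eq_zero_iff_mem]
    exact IsReduced.eq_zero _ ⟨k, by rw [← map_pow, hxk, map_zero]⟩
  obtain ⟨y, rfl⟩ := Ideal.mem_span_singleton'.mp hx
  have hy : y ∈ nilradical S := by
    refine ⟨k, (hreg.pow k).right_eq_zero_of_smul ?_⟩
    rw [smul_eq_mul, ← hxk, mul_pow, mul_comm]
  rw [mul_comm y t]
  exact Ideal.mul_mem_mul (Ideal.mem_span_singleton_self t) hy

theorem isReduced_of_isReduced_quotient_span_singleton {S : Type*} [CommRing S]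
    [IsNoetherianRing S] {t : S} (ht : t ∈ (⊥ : Ideal S).jacobson) (hreg : IsSMulRegular S t)
    (hred : IsReduced (S ⧸ Ideal.span {t})) : IsReduced S := by
  have hnil : nilradical S = ⊥ :=
    Submodule.eq_bot_of_le_smul_of_le_jacobson_bot _ _ (IsNoetherian.noetherian _)
      (nilradical_le_span_singleton_mul_nilradical hreg hred)
      ((Ideal.span_singleton_le_iff_mem _).mpr ht)
  exact ⟨fun x hx => (Submodule.mem_bot S).mp (hnil ▸ hx)⟩

/-- Let `A` be a PID, `R` a Noetherian `A`-algebra, `n` a prime of `R` lying over `p`, and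
assume the induced local morphism `A_p → R_n` is flat. If the fiber `R_n ⊗_{A_p} k(p)`
(realized as `R_n / p R_n`) is reduced, then `R_n` is reduced. -/
theorem stmt10 (A R : Type*) [CommRing A] [IsDomain A] [IsPrincipalIdealRing A]
    [CommRing R] [IsNoetherianRing R] [Algebra A R]
    (n : Ideal R) [n.IsPrime] (p : Ideal A) [p.IsPrime]
    (hp : p = n.comap (algebraMap A R))
    (hflat :
      let _ : Algebra (Localization.AtPrime p) (Localization.AtPrime n) :=
        (Localization.localRingHom p n (algebraMap A R) hp).toAlgebra
      Module.Flat (Localization.AtPrime p) (Localization.AtPrime n))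
    (hred : IsReduced ((Localization.AtPrime n) ⧸
      Ideal.map ((algebraMap R (Localization.AtPrime n)).comp (algebraMap A R)) p)) :
    IsReduced (Localization.AtPrime n) := by
  let := (Localization.localRingHom p n (algebraMap A R) hp).toAlgebra
  rcases eq_or_ne p ⊥ with rfl | hp0
  · rw [Ideal.map_bot] at hred
    exact isReduced_of_injective _ (RingEquiv.quotientBot (Localization.AtPrime n)).symm.injective
  obtain ⟨a, rfl⟩ := (IsPrincipalIdealRing.principal p).principal
  have ha : a ≠ 0 := fun h => hp0 (by rw [h, Ideal.span_singleton_eq_bot])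
  have hmap : algebraMap (Localization.AtPrime (Ideal.span {a})) (Localization.AtPrime n)
      (algebraMap A _ a) = algebraMap R (Localization.AtPrime n) (algebraMap A R a) :=
    Localization.localRingHom_to_map _ _ _ hp a
  refine isReduced_of_isReduced_quotient_span_singleton (t := algebraMap R _ (algebraMap A R a))
    ?_ ?_ (by rwa [Ideal.map_span, Set.image_singleton] at hred)
  · refine IsLocalRing.maximalIdeal_le_jacobson _
      ((IsLocalization.AtPrime.to_map_mem_maximal_iff _ n _ _).mpr ?_)
    exact (hp ▸ Ideal.mem_span_singleton_self a : a ∈ n.comap (algebraMap A R))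
  · have ha' : algebraMap A (Localization.AtPrime (Ideal.span {a})) a ≠ 0 :=
      (map_ne_zero_iff _ (IsLocalization.injective _
        (Ideal.span {a}).primeCompl_le_nonZeroDivisors)).mpr ha
    exact hmap ▸ (IsSMulRegular.of_ne_zero ha').of_flat
end

section
/- Let (A, m) be a discrete valuation ring and (R, n) a Noetherian local ring which is flat over A. If R/mR is reduced, then R ⊗_A Q(A) is reduced, where Q(A) is the fraction field of A. -/
/-!
Let `π` be the image of a uniformizer of `A`. Flatness makes `π` a nonzerodivisor of `R`, so if
`x = π ^ k * u` is nilpotent then so is `u`, hence `u ∈ (π)` because `R / (π)` is reduced, and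
`x ∈ (π ^ (k + 1))`. Thus a nilpotent element lies in `⋂ₖ (π ^ k) = 0` (Krull), so `R` is reduced,
and so is its localization `Q(A) ⊗[A] R`.
-/

open scoped TensorProduct

theorem IsLocalization.isReduced {R S : Type*} [CommRing R] [CommRing S] [Algebra R S]
    (M : Submonoid R) [IsLocalization M S] [IsReduced R] : IsReduced S :=
  isReduced_of_injective (IsLocalization.algEquiv M (Localization M) S).symm.toRingHom
    (IsLocalization.algEquiv M (Localization M) S).symm.injective

section QuotientSpan

variable {R : Type*} [CommRing R] {π : R}

theorem pow_dvd_of_isNilpotent_of_isReduced_quotient_span (hπ : IsSMulRegular R π)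
    (hred : IsReduced (R ⧸ Ideal.span {π})) {x : R} (hx : IsNilpotent x) (k : ℕ) :
    π ^ k ∣ x := by
  induction k with
  | zero => simp
  | succ k ih =>
    obtain ⟨u, rfl⟩ := ih
    obtain ⟨n, hn⟩ := hx
    have hu : u ^ n = 0 := (hπ.pow (k * n)).right_eq_zero_of_smul <| by
      rw [smul_eq_mul, pow_mul, ← mul_pow, hn]
    have hu_mem : u ∈ Ideal.span {π} := by
      rw [← Ideal.Quotient.eq_zero_iff_mem]
      exact IsReduced.eq_zero _ ⟨n, by rw [← map_pow, hu, map_zero]⟩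
    rw [pow_succ]
    exact mul_dvd_mul_left _ (Ideal.mem_span_singleton.mp hu_mem)

theorem isReduced_of_isReduced_quotient_span (hπ : IsSMulRegular R π)
    (hK : ⨅ k : ℕ, Ideal.span {π} ^ k = ⊥) (hred : IsReduced (R ⧸ Ideal.span {π})) :
    IsReduced R where
  eq_zero x hx := by
    rw [← Ideal.mem_bot, ← hK, Ideal.mem_iInf]
    intro k
    rw [Ideal.span_singleton_pow, Ideal.mem_span_singleton]
    exact pow_dvd_of_isNilpotent_of_isReduced_quotient_span hπ hred hx k

theorem IsLocalRing.isReduced_of_isReduced_quotient_span [IsNoetherianRing R] [IsLocalRing R]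
    (hπ : IsSMulRegular R π) (hπ_unit : ¬IsUnit π) (hred : IsReduced (R ⧸ Ideal.span {π})) :
    IsReduced R :=
  _root_.isReduced_of_isReduced_quotient_span hπ
    (Ideal.iInf_pow_eq_bot_of_isLocalRing _ (Ideal.span_singleton_eq_top.not.mpr hπ_unit)) hred

end QuotientSpan

theorem isReduced_of_flat_of_isReduced_quotient_map_maximalIdeal (A R : Type*) [CommRing A]
    [IsDomain A] [IsDiscreteValuationRing A] [CommRing R] [IsNoetherianRing R] [IsLocalRing R]
    [Algebra A R] [Module.Flat A R] [IsLocalHom (algebraMap A R)]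
    (hred : IsReduced (R ⧸ Ideal.map (algebraMap A R) (IsLocalRing.maximalIdeal A))) :
    IsReduced R := by
  obtain ⟨ϖ, hϖ⟩ := IsDiscreteValuationRing.exists_irreducible A
  rw [(IsDiscreteValuationRing.irreducible_iff_uniformizer ϖ).mp hϖ, Ideal.map_span,
    Set.image_singleton] at hred
  exact IsLocalRing.isReduced_of_isReduced_quotient_span
    (IsRegular.of_ne_zero hϖ.ne_zero).isSMulRegular.of_flat
    ((isUnit_map_iff (algebraMap A R) ϖ).not.mpr hϖ.not_isUnit) hred

/-- Let `(A, m)` be a discrete valuation ring and `(R, n)` a Noetherian local ring, flat and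
local over `A`. If `R/mR` is reduced, then `R ⊗_A Q(A)` is reduced, `Q(A)` the fraction
field of `A`. -/
theorem stmt11 (A R : Type*) [CommRing A] [IsDomain A] [IsDiscreteValuationRing A]
    [CommRing R] [IsNoetherianRing R] [IsLocalRing R] [Algebra A R] [Module.Flat A R]
    [IsLocalHom (algebraMap A R)]
    (hred : IsReduced (R ⧸ Ideal.map (algebraMap A R) (IsLocalRing.maximalIdeal A))) :
    IsReduced (FractionRing A ⊗[A] R) := by
  have := isReduced_of_flat_of_isReduced_quotient_map_maximalIdeal A R hred
  let := Algebra.TensorProduct.rightAlgebra (R := A) (A := FractionRing A) (B := R)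
  exact IsLocalization.isReduced (Algebra.algebraMapSubmonoid R (nonZeroDivisors A))
end

section
/- Let (A, m) → (R, n) be a flat local morphism of Noetherian local rings. Then the integral closure satisfies R̄ ⊗_A Q(A) = closure of R ⊗_A Q(A) in its total quotient ring; in particular, if R is normal then R ⊗_A Q(A) is normal. -/
/-!
`R ⊗_A Q(A)` is the localization of `R` at the image `S` of the non-zerodivisors of `A`, which
by flatness consists of non-zerodivisors of `R`, so that it sits inside `Q(R)`. Integral closure
commutes with localization: clearing denominators in a monic equation over `S⁻¹R` shows that some
`S`-multiple of an element integral over `S⁻¹R` is integral over `R`, and conversely. When `R` is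
normal that multiple lies in `R`.
-/

set_option synthInstance.maxHeartbeats 1000000
set_option maxHeartbeats 1000000

noncomputable section

/-- The total quotient ring `Q(R)`. -/
abbrev QR (R : Type*) [CommRing R] := Localization (nonZeroDivisors R)

noncomputable instance algAQR (A R : Type*) [CommRing A] [CommRing R] [Algebra A R] :
    Algebra A (QR R) :=
  ((algebraMap R (QR R)).comp (algebraMap A R)).toAlgebra

/-- The image of `R ⊗_A Q(A)` in `Q(R)`: elements `x` with `a·x ∈ R` for some
non-zerodivisor `a ∈ A`. -/
def QAimage (A R : Type*) [CommRing A] [CommRing R] [Algebra A R] : Subalgebra A (QR R) where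
  carrier := {x | ∃ r : R, ∃ a ∈ nonZeroDivisors A, algebraMap A (QR R) a * x = algebraMap R (QR R) r}
  zero_mem' := ⟨0, 1, one_mem _, by simp⟩
  one_mem' := ⟨1, 1, one_mem _, by simp⟩
  add_mem' := by
    rintro x y ⟨r, a, ha, hx⟩ ⟨s, b, hb, hy⟩
    refine ⟨algebraMap A R b * r + algebraMap A R a * s, a * b, mul_mem ha hb, ?_⟩
    have h1 : algebraMap A (QR R) a = algebraMap R (QR R) (algebraMap A R a) := rfl
    have h2 : algebraMap A (QR R) b = algebraMap R (QR R) (algebraMap A R b) := rfl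
    rw [map_mul, map_add, map_mul, map_mul, ← h1, ← h2, ← hx, ← hy]
    ring
  mul_mem' := by
    rintro x y ⟨r, a, ha, hx⟩ ⟨s, b, hb, hy⟩
    refine ⟨r * s, a * b, mul_mem ha hb, ?_⟩
    rw [map_mul, map_mul, ← hx, ← hy]
    ring
  algebraMap_mem' := fun a =>
    ⟨algebraMap A R a, 1, one_mem _, by rw [map_one, one_mul]; rfl⟩

open scoped nonZeroDivisors

-- Instance search takes `algAQR R R` for `Algebra R (QR R)`: it is not defeq to the `Localization`
-- algebra, so Mathlib's instance does not apply, but its `algebraMap` is, which is all we need.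
instance QR.isFractionRing (R : Type*) [CommRing R] : IsFractionRing R (QR R) :=
  ⟨(Localization.isLocalization (M := R⁰)).1⟩

theorem Module.Flat.algebraMap_mem_nonZeroDivisors {A R : Type*} [CommRing A] [CommRing R]
    [Algebra A R] [Module.Flat A R] {a : A} (ha : a ∈ A⁰) : algebraMap A R a ∈ R⁰ := by
  refine mem_nonZeroDivisors_iff_right.mpr fun r hr => ?_
  refine Module.Flat.isSMulRegular_of_nonZeroDivisors (M := R) ha ?_
  simpa [Algebra.smul_def, mul_comm] using hr

namespace QAimage

variable (A R : Type*) [CommRing A] [CommRing R] [Algebra A R]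

instance : Algebra R (QAimage A R) :=
  ((algebraMap R (QR R)).codRestrict (QAimage A R)
    fun r => show _ ∈ QAimage A R from ⟨r, 1, one_mem _, by simp⟩).toAlgebra

-- The default `SMul R (QR R)` is the `Localization` one, not that of `algAQR R R`.
instance : @IsScalarTower R (QAimage A R) (QR R) _ _ Algebra.toSMul :=
  IsScalarTower.of_algebraMap_eq fun _ => rfl

variable {A R} [Module.Flat A R]

theorem isUnit_algebraMap_QR {a : A} (ha : a ∈ A⁰) : IsUnit (algebraMap A (QR R) a) :=
  IsLocalization.map_units (QR R) (⟨_, Module.Flat.algebraMap_mem_nonZeroDivisors ha⟩ : R⁰)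

theorem inv_algebraMap_mem {a : A} (ha : a ∈ A⁰) :
    Ring.inverse (algebraMap A (QR R) a) ∈ QAimage A R :=
  ⟨1, a, ha, by rw [map_one, Ring.mul_inverse_cancel _ (isUnit_algebraMap_QR ha)]⟩

variable (A R) in
instance isLocalization : IsLocalization (A⁰.map (algebraMap A R)) (QAimage A R) where
  map_units := by
    rintro ⟨_, a, ha, rfl⟩
    refine isUnit_iff_exists_inv.mpr ⟨⟨_, inv_algebraMap_mem ha⟩, Subtype.ext ?_⟩
    exact Ring.mul_inverse_cancel (algebraMap A (QR R) a) (isUnit_algebraMap_QR ha)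
  surj := by
    rintro ⟨z, r, a, ha, hz⟩
    exact ⟨(r, ⟨_, a, ha, rfl⟩), Subtype.ext (by rw [mul_comm]; exact hz)⟩
  exists_of_eq h := ⟨1, by rw [IsFractionRing.injective R (QR R) (congrArg Subtype.val h)]⟩

theorem isIntegral_iff {x : QR R} :
    IsIntegral (QAimage A R) x ↔ ∃ a ∈ A⁰, IsIntegral R (algebraMap A (QR R) a * x) := by
  constructor
  · intro hx
    obtain ⟨⟨_, a, ha, rfl⟩, hax⟩ :=
      hx.exists_multiple_integral_of_isLocalization (A⁰.map (algebraMap A R)) x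
    exact ⟨a, ha, hax⟩
  · rintro ⟨a, ha, hax⟩
    have hinv : IsIntegral (QAimage A R) (Ring.inverse (algebraMap A (QR R) a)) :=
      isIntegral_algebraMap (x := (⟨_, inv_algebraMap_mem ha⟩ : QAimage A R))
    rw [← Ring.inverse_mul_cancel_left _ x (isUnit_algebraMap_QR ha)]
    exact hinv.mul (hax.tower_top (A := QAimage A R))

end QAimage

theorem stmt12_general (A R : Type*) [CommRing A] [CommRing R] [Algebra A R] [Module.Flat A R] :
    (∀ x : QR R,
      IsIntegral (QAimage A R) x ↔
        ∃ y ∈ integralClosure R (QR R), ∃ a ∈ nonZeroDivisors A,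
          algebraMap A (QR R) a * x = y) ∧
    (IsIntegrallyClosedIn R (QR R) →
      ∀ x : QR R, IsIntegral (QAimage A R) x → x ∈ QAimage A R) := by
  have key (x : QR R) : IsIntegral (QAimage A R) x ↔
      ∃ y ∈ integralClosure R (QR R), ∃ a ∈ A⁰, algebraMap A (QR R) a * x = y := by
    rw [QAimage.isIntegral_iff]
    exact ⟨fun ⟨a, ha, hax⟩ => ⟨_, hax, a, ha, rfl⟩,
      fun ⟨_, hy, a, ha, hax⟩ => ⟨a, ha, hax ▸ hy⟩⟩
  refine ⟨key, fun _ x hx => ?_⟩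
  obtain ⟨y, hy, a, ha, hax⟩ := (key x).mp hx
  obtain ⟨r, rfl⟩ := IsIntegrallyClosedIn.isIntegral_iff.mp hy
  exact ⟨r, a, ha, hax⟩

/-- Let `(A, m) → (R, n)` be a flat local morphism of Noetherian local rings, `A` a domain
with fraction field `Q(A)` and `R` reduced. Then `R̄ ⊗_A Q(A)` is the integral closure of
`R ⊗_A Q(A)` in its total quotient ring `Q(R ⊗_A Q(A)) = Q(R)`; in particular, if `R` is
normal then `R ⊗_A Q(A)` is normal. -/
theorem stmt12 (A R : Type*) [CommRing A] [IsDomain A] [IsLocalRing A]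
    [CommRing R] [IsNoetherianRing R] [IsLocalRing R] [IsReduced R]
    [Algebra A R] [Module.Flat A R] [IsLocalHom (algebraMap A R)] :
    (∀ x : QR R,
      IsIntegral (QAimage A R) x ↔
        ∃ y ∈ integralClosure R (QR R), ∃ a ∈ nonZeroDivisors A,
          algebraMap A (QR R) a * x = y) ∧
    (IsIntegrallyClosedIn R (QR R) →
      ∀ x : QR R, IsIntegral (QAimage A R) x → x ∈ QAimage A R) :=
  stmt12_general A R
end
end
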